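/- Let 0 = w_0 < w_1 < ⋯ < w_s ≤ n be integers and let C be the clique {0, v_1/2, …, v_s/2} in the Cayley graph on (1/2)A_n^# with generators (1/2)p_H(V_0), where v_i = p_H(1^{w_i} 0^{n+1−w_i}). Then the closed neighborhood of C has cardinality (s+1)·2^{n+1} − (Σ_{i=1}^s 2^{n+1−(w_i−w_{i−1})} + 2^{w_s}), and hence |C|/|N[C]| ≤ 1/2ⁿ. -/

import Mathlib

open Set Filter MeasureTheory Pointwise

/-- The hyperplane `H = {x ∈ ℝ^{n+1} : ∑ xᵢ = 0}`. -/
def Hset (n : ℕ) : Set (Fin (n + 1) → ℝ) := {x | ∑ i, x i = 0}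

/-- The root lattice `Aₙ = ℤ^{n+1} ∩ H`. -/
def Alat (n : ℕ) : Set (Fin (n + 1) → ℝ) :=
  {x | (∀ i, ∃ m : ℤ, x i = (m : ℝ)) ∧ ∑ i, x i = 0}

/-- The Voronoï region of `Aₙ` inside `H`. -/
def VorAn (n : ℕ) : Set (Fin (n + 1) → ℝ) :=
  {z | z ∈ Hset n ∧ ∀ x ∈ Alat n, ∑ i, (z i) ^ 2 ≤ ∑ i, (z i - x i) ^ 2}

/-- Orthogonal projection of `ℝ^{n+1}` onto the hyperplane `H`. -/
noncomputable def pH (n : ℕ) (u : Fin (n + 1) → ℝ) : Fin (n + 1) → ℝ :=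
  fun i => u i - (∑ j, u j) / (n + 1)

/-- `V₀ = {0,1}^{n+1} \ {0, (1,…,1)}`. -/
def V0set (n : ℕ) : Set (Fin (n + 1) → ℝ) :=
  {u | (∀ i, u i = 0 ∨ u i = 1) ∧ u ≠ 0 ∧ u ≠ fun _ => 1}

/-- The vertex set of the Voronoï region of `Aₙ`. -/
noncomputable def VPAn (n : ℕ) : Set (Fin (n + 1) → ℝ) := pH n '' V0set n

/-- The 0-1 vector with `w` leading ones. -/
def uvec (n : ℕ) (w : ℕ) : Fin (n + 1) → ℝ := fun j => if (j : ℕ) < w then 1 else 0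

/-!
Every point of `N[C]` is `½ p_H(v_k + u)` with `k ≤ s` and `u ∈ {0,1}^{n+1}`, and `½ p_H` identifies
integer vectors exactly when they differ by a constant. Since `w_s ≤ n`, every `v_k` has last
coordinate `0`; normalising the last coordinate of `v_k + u` to `0` identifies `N[C]` with a union of
`2(s+1)` unit boxes `[c, c + 1]` in `ℤⁿ`, whose corners form the monotone chain
`c_0 - 1 ≤ ⋯ ≤ c_s - 1 ≤ c_0 ≤ ⋯ ≤ c_s`, where `c_k` has `w_k` leading ones. For a monotone chain of
boxes inclusion–exclusion only involves consecutive boxes, and two consecutive boxes meet in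
`2^{#coordinates where their corners agree}` points: `2^{n - (w_{i+1} - w_i)}` twice for each `i < s`,
and `2^{w_s}` where the two halves of the chain meet. Each subtracted term is at most `2ⁿ`, so
`|N[C]| ≥ (s+1) 2ⁿ ≥ |C| 2ⁿ`.
-/

section IntervalChain

variable {α : Type*} [Preorder α] [LocallyFiniteOrder α] [DecidableEq α] {a b : ℕ → α}

/-- Only consecutive intervals of the chain need correcting for, since
`[a i, b i] ∩ [a k, b k] ⊆ [a j, b j]` whenever `i ≤ j ≤ k`. -/
theorem Finset.card_biUnion_Icc_add_sum_card_Icc (ha : Monotone a) (hb : Monotone b) (K : ℕ) :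
    ((Finset.range (K + 1)).biUnion fun j => Finset.Icc (a j) (b j)).card
      + ∑ j ∈ Finset.range K, (Finset.Icc (a (j + 1)) (b j)).card
      = ∑ j ∈ Finset.range (K + 1), (Finset.Icc (a j) (b j)).card := by
  induction K with
  | zero => simp
  | succ K ih =>
    set U := (Finset.range (K + 1)).biUnion fun j => Finset.Icc (a j) (b j) with hU
    have hinter : Finset.Icc (a (K + 1)) (b (K + 1)) ∩ U = Finset.Icc (a (K + 1)) (b K) := by
      ext r
      simp only [U, Finset.mem_inter, Finset.mem_biUnion, Finset.mem_range, Finset.mem_Icc]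
      constructor
      · rintro ⟨⟨har, -⟩, j, hj, -, hrb⟩
        exact ⟨har, hrb.trans (hb (Nat.lt_succ_iff.mp hj))⟩
      · rintro ⟨har, hrb⟩
        exact ⟨⟨har, hrb.trans (hb K.le_succ)⟩, K, K.lt_succ_self, (ha K.le_succ).trans har, hrb⟩
    have hunion := Finset.card_union_add_card_inter (Finset.Icc (a (K + 1)) (b (K + 1))) U
    rw [hinter] at hunion
    rw [Finset.sum_range_succ _ (K + 1), ← ih, Finset.range_add_one (n := K + 1),
      Finset.biUnion_insert, Finset.sum_range_succ, ← hU]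
    omega

end IntervalChain

section IntegerBoxes

variable {ι : Type*} [Fintype ι] [DecidableEq ι]

theorem card_Icc_add_one_of_le {a b : ι → ℤ} (hab : a ≤ b) (hba : b ≤ a + 1) :
    (Finset.Icc b (a + 1)).card = 2 ^ (Finset.univ.filter fun i => a i = b i).card := by
  have hfactor : ∀ i, (Finset.Icc (b i) (a i + 1)).card = if a i = b i then 2 else 1 := by
    intro i
    have h1 : a i ≤ b i := hab i
    have h2 : b i ≤ a i + 1 := hba i
    rw [Int.card_Icc]
    split_ifs <;> omega
  rw [Pi.card_Icc]
  simp only [Pi.add_apply, Pi.one_apply]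
  rw [Finset.prod_congr rfl fun i _ => hfactor i, Finset.prod_ite,
    Finset.prod_const, Finset.prod_const_one, mul_one]

theorem card_Icc_self_add_one (a : ι → ℤ) :
    (Finset.Icc a (a + 1)).card = 2 ^ Fintype.card ι := by
  simpa using card_Icc_add_one_of_le le_rfl (le_add_of_nonneg_right zero_le_one)

end IntegerBoxes

section DoubledChain

variable {ι : Type*} (c : ℕ → ι → ℤ) (s : ℕ)

def doubledChain (j : ℕ) : ι → ℤ :=
  if j ≤ s then c j - 1 else c (j - (s + 1))

noncomputable def doubledChainBoxes [Fintype ι] [DecidableEq ι] : Finset (ι → ℤ) :=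
  (Finset.range (2 * s + 2)).biUnion fun j =>
    Finset.Icc (doubledChain c s j) (doubledChain c s j + 1)

variable {c s}

theorem doubledChain_of_le {j : ℕ} (h : j ≤ s) : doubledChain c s j = c j - 1 :=
  if_pos h

theorem doubledChain_add (j : ℕ) : doubledChain c s (s + 1 + j) = c j := by
  rw [doubledChain, if_neg (by omega), Nat.add_sub_cancel_left]

theorem monotone_doubledChain (hc : Monotone c) (h0 : 0 ≤ c 0) (h1 : c s ≤ 1) :
    Monotone (doubledChain c s) := by
  refine monotone_nat_of_le_succ fun j => ?_
  rcases lt_trichotomy j s with hj | rfl | hj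
  · rw [doubledChain_of_le hj.le, doubledChain_of_le hj]
    exact sub_le_sub_right (hc j.le_succ) 1
  · rw [doubledChain_of_le le_rfl, ← add_zero (j + 1), doubledChain_add]
    exact sub_le_iff_le_add.mpr (h1.trans (le_add_of_nonneg_left h0))
  · obtain ⟨k, rfl⟩ : ∃ k, j = s + 1 + k := ⟨j - (s + 1), by omega⟩
    rw [doubledChain_add, add_assoc, doubledChain_add]
    exact hc k.le_succ

variable [Fintype ι] [DecidableEq ι]

theorem coe_doubledChainBoxes :
    (doubledChainBoxes c s : Set (ι → ℤ))
      = ⋃ k ∈ Set.Iic s, (Set.Icc (c k - 1) (c k) ∪ Set.Icc (c k) (c k + 1)) := by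
  ext r
  simp only [doubledChainBoxes, Finset.coe_biUnion, Finset.coe_Icc, Finset.coe_range,
    Set.mem_iUnion, Set.mem_Iio, Set.mem_Iic, Set.mem_union, exists_prop]
  constructor
  · rintro ⟨j, hj, hr⟩
    by_cases hjs : j ≤ s
    · rw [doubledChain_of_le hjs, sub_add_cancel] at hr
      exact ⟨j, hjs, Or.inl hr⟩
    · obtain ⟨k, rfl⟩ : ∃ k, j = s + 1 + k := ⟨j - (s + 1), by omega⟩
      rw [doubledChain_add] at hr
      exact ⟨k, by omega, Or.inr hr⟩
  · rintro ⟨k, hk, hr | hr⟩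
    · exact ⟨k, by omega, by rwa [doubledChain_of_le hk, sub_add_cancel]⟩
    · exact ⟨s + 1 + k, by omega, by rwa [doubledChain_add]⟩

theorem card_doubledChainBoxes (hc : Monotone c) (h0 : 0 ≤ c 0) (h1 : c s ≤ 1) :
    (doubledChainBoxes c s).card
      + (2 * ∑ j ∈ Finset.range s, 2 ^ (Finset.univ.filter fun i => c j i = c (j + 1) i).card
        + 2 ^ (Finset.univ.filter fun i => c s i = c 0 i + 1).card)
      = (2 * s + 2) * 2 ^ Fintype.card ι := by
  have hD := monotone_doubledChain hc h0 h1
  have hstep : ∀ j < s, c (j + 1) ≤ c j + 1 := fun j hj =>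
    (hc hj).trans (h1.trans (le_add_of_nonneg_left (h0.trans (hc j.zero_le))))
  have hlower : ∀ j < s, (Finset.Icc (doubledChain c s (j + 1)) (doubledChain c s j + 1)).card
      = 2 ^ (Finset.univ.filter fun i => c j i = c (j + 1) i).card := by
    intro j hj
    rw [doubledChain_of_le hj, doubledChain_of_le hj.le,
      card_Icc_add_one_of_le (sub_le_sub_right (hc j.le_succ) 1)
        (by rw [sub_add_cancel, sub_le_iff_le_add]; exact hstep j hj)]
    simp only [Pi.sub_apply, sub_left_inj]
  have hjunction : (Finset.Icc (doubledChain c s (s + 1)) (doubledChain c s s + 1)).card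
      = 2 ^ (Finset.univ.filter fun i => c s i = c 0 i + 1).card := by
    rw [← add_zero (s + 1), doubledChain_add, doubledChain_of_le le_rfl,
      card_Icc_add_one_of_le (sub_le_iff_le_add.mpr (h1.trans (le_add_of_nonneg_left h0)))
        (by rw [sub_add_cancel]; exact hc s.zero_le)]
    simp only [Pi.sub_apply, sub_eq_iff_eq_add, Pi.one_apply]
  have hupper : ∀ j < s,
      (Finset.Icc (doubledChain c s (s + 1 + j + 1)) (doubledChain c s (s + 1 + j) + 1)).card
      = 2 ^ (Finset.univ.filter fun i => c j i = c (j + 1) i).card := by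
    intro j hj
    rw [add_assoc, doubledChain_add, doubledChain_add]
    exact card_Icc_add_one_of_le (hc j.le_succ) (hstep j hj)
  have hchain := Finset.card_biUnion_Icc_add_sum_card_Icc hD (hD.add_const 1) (2 * s + 1)
  rw [show 2 * s + 1 = s + 1 + s by ring, Finset.sum_range_add, Finset.sum_range_succ,
    Finset.sum_congr rfl fun j hj => hlower j (Finset.mem_range.mp hj), hjunction,
    Finset.sum_congr rfl fun j hj => hupper j (Finset.mem_range.mp hj)] at hchain
  simp only [card_Icc_self_add_one, Finset.sum_const, Finset.card_range,
    smul_eq_mul] at hchain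
  rw [doubledChainBoxes, show 2 * s + 2 = s + 1 + s + 1 by ring]
  linarith

end DoubledChain

section LeadingOnes

def leadingOnes (m x : ℕ) : Fin m → ℤ := fun q => if (q : ℕ) < x then 1 else 0

variable {m x y : ℕ}

theorem leadingOnes_mono (m : ℕ) : Monotone (leadingOnes m) := fun x y h q => by
  simp only [leadingOnes]
  split_ifs <;> omega

@[simp] theorem leadingOnes_zero : leadingOnes m 0 = 0 := by
  ext q
  simp [leadingOnes]

theorem leadingOnes_le_one : leadingOnes m x ≤ 1 := fun q => by
  simp only [leadingOnes]
  split_ifs <;> simp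

theorem init_leadingOnes : Fin.init (leadingOnes (m + 1) x) = leadingOnes m x := by
  ext q
  simp [Fin.init, leadingOnes]

theorem leadingOnes_last (h : x ≤ m) : leadingOnes (m + 1) x (Fin.last m) = 0 := by
  simp [leadingOnes, h]

theorem card_filter_leadingOnes_eq (hxy : x ≤ y) (hy : y ≤ m) :
    (Finset.univ.filter fun q => leadingOnes m x q = leadingOnes m y q).card = m - (y - x) := by
  have hne : (Finset.univ.filter fun q => ¬leadingOnes m x q = leadingOnes m y q)
      = (Finset.univ.filter fun q : Fin m => (q : ℕ) < y)
        \ Finset.univ.filter fun q : Fin m => (q : ℕ) < x := by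
    ext q
    rw [Finset.mem_filter]
    simp only [leadingOnes, Finset.mem_sdiff, Finset.mem_filter_univ]
    split_ifs <;> simp <;> omega
  have hsplit := Finset.card_filter_add_card_filter_not (s := Finset.univ)
    (fun q => leadingOnes m x q = leadingOnes m y q)
  rw [hne, Finset.card_sdiff_of_subset (Finset.monotone_filter_right _ fun q h => by omega),
    Fin.card_filter_val_lt, Fin.card_filter_val_lt, Finset.card_univ, Fintype.card_fin] at hsplit
  omega

theorem card_filter_leadingOnes_eq_one (hx : x ≤ m) :
    (Finset.univ.filter fun q => leadingOnes m x q = 1).card = x := by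
  simp [leadingOnes, Fin.card_filter_val_lt, hx]

end LeadingOnes

section HalfProjection

variable {n : ℕ}

/-- Its image is the vertex set `½ Aₙ^#` of the Cayley graph. -/
noncomputable def halfProj (n : ℕ) : (Fin (n + 1) → ℤ) →+ (Fin (n + 1) → ℝ) where
  toFun x := (2⁻¹ : ℝ) • pH n fun i => (x i : ℝ)
  map_zero' := by
    ext i
    simp [pH]
  map_add' x y := by
    ext i
    simp only [pH, Pi.add_apply, Int.cast_add, Finset.sum_add_distrib, Pi.smul_apply, smul_eq_mul]
    ring

theorem halfProj_apply (x : Fin (n + 1) → ℤ) :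
    halfProj n x = (2⁻¹ : ℝ) • pH n fun i => (x i : ℝ) :=
  rfl

theorem halfProj_const (t : ℤ) : halfProj n (fun _ => t) = 0 := by
  ext i
  simp only [halfProj_apply, pH, Finset.sum_const, Finset.card_univ, Fintype.card_fin,
    nsmul_eq_mul, Pi.smul_apply, Pi.zero_apply, smul_eq_mul]
  field_simp
  push_cast
  ring

theorem eq_of_halfProj_eq {x y : Fin (n + 1) → ℤ} (h : halfProj n x = halfProj n y)
    (hlast : x (Fin.last n) = y (Fin.last n)) : x = y := by
  ext i
  have hi := congrFun h i
  have hl := congrFun h (Fin.last n)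
  simp only [halfProj_apply, pH, Pi.smul_apply, smul_eq_mul] at hi hl
  have : (x i : ℝ) - x (Fin.last n) = y i - y (Fin.last n) := by linarith
  rw [hlast] at this
  exact_mod_cast sub_left_injective this

theorem halfProj_snoc_one (r : Fin n → ℤ) :
    halfProj n (Fin.snoc r 1) = halfProj n (Fin.snoc (r - 1) 0) := by
  have hshift : (Fin.snoc r 1 : Fin (n + 1) → ℤ) = Fin.snoc (r - 1) 0 + 1 := by
    ext i
    refine Fin.lastCases ?_ (fun j => ?_) i <;> simp
  rw [hshift, map_add, show (1 : Fin (n + 1) → ℤ) = fun _ => 1 from rfl, halfProj_const, add_zero]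

theorem halfProj_snoc_zero_injective :
    Function.Injective fun r : Fin n → ℤ => halfProj n (Fin.snoc r 0) := fun r r' h => by
  simpa using congrArg Fin.init (eq_of_halfProj_eq h (by simp))

/-- Shifting the last coordinate to `0`: points of the box with last coordinate `1` land in
`[c - 1, c]`, those with last coordinate `0` in `[c, c + 1]`. -/
theorem image_halfProj_Icc {v : Fin (n + 1) → ℤ} (hv : v (Fin.last n) = 0) :
    halfProj n '' Set.Icc v (v + 1)
      = (fun r => halfProj n (Fin.snoc r 0)) ''
          (Set.Icc (Fin.init v - 1) (Fin.init v) ∪ Set.Icc (Fin.init v) (Fin.init v + 1)) := by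
  have hmem : ∀ (r : Fin n → ℤ) (t : ℤ), (Fin.snoc r t : Fin (n + 1) → ℤ) ∈ Set.Icc v (v + 1)
      ↔ r ∈ Set.Icc (Fin.init v) (Fin.init v + 1) ∧ 0 ≤ t ∧ t ≤ 1 := by
    intro r t
    simp only [Set.mem_Icc, Pi.le_def, Fin.forall_fin_succ', Fin.snoc_castSucc, Fin.snoc_last,
      Pi.add_apply, Pi.one_apply, Fin.init, hv, zero_add]
    tauto
  ext y
  constructor
  · rintro ⟨x, hx, rfl⟩
    rw [← Fin.snoc_init_self x, hmem] at hx
    obtain ⟨⟨hlo, hhi⟩, h0, h1⟩ := hx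
    rcases (show x (Fin.last n) = 0 ∨ x (Fin.last n) = 1 by omega) with ht | ht
    · refine ⟨Fin.init x, Or.inr ⟨hlo, hhi⟩, ?_⟩
      change halfProj n (Fin.snoc (Fin.init x) 0) = _
      rw [← ht, Fin.snoc_init_self]
    · refine ⟨Fin.init x - 1, Or.inl ⟨sub_le_sub_right hlo 1, sub_le_iff_le_add.mpr hhi⟩, ?_⟩
      change halfProj n (Fin.snoc (Fin.init x - 1) 0) = _
      rw [← halfProj_snoc_one, ← ht, Fin.snoc_init_self]
  · rintro ⟨r, hr | hr, rfl⟩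
    · refine ⟨Fin.snoc (r + 1) 1, (hmem _ _).2 ⟨?_, zero_le_one, le_rfl⟩, ?_⟩
      · exact ⟨sub_le_iff_le_add.mp hr.1, by gcongr; exact hr.2⟩
      · rw [halfProj_snoc_one, add_sub_cancel_right]
    · exact ⟨Fin.snoc r 0, (hmem _ _).2 ⟨hr, le_rfl, zero_le_one⟩, rfl⟩

theorem zero_union_smul_VPAn : ({0} ∪ (2⁻¹ : ℝ) • VPAn n) = halfProj n '' Set.Icc 0 1 := by
  ext y
  constructor
  · rintro (rfl | ⟨_, ⟨u, ⟨hu, -, -⟩, rfl⟩, rfl⟩)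
    · exact ⟨0, ⟨le_rfl, zero_le_one⟩, map_zero _⟩
    · refine ⟨fun i => if u i = 1 then 1 else 0, ⟨fun i => ?_, fun i => ?_⟩, ?_⟩
      · dsimp only [Pi.zero_apply]
        split_ifs <;> norm_num
      · dsimp only [Pi.one_apply]
        split_ifs <;> norm_num
      · rw [halfProj_apply]
        congr 2
        funext i
        rcases hu i with h | h <;> simp [h]
  · rintro ⟨x, ⟨hx0, hx1⟩, rfl⟩
    have h01 : ∀ i, x i = 0 ∨ x i = 1 := fun i => by
      have h0i : 0 ≤ x i := hx0 i
      have h1i : x i ≤ 1 := hx1 i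
      omega
    by_cases hzero : x = 0
    · left
      rw [hzero, map_zero, Set.mem_singleton_iff]
    by_cases hone : x = 1
    · left
      rw [hone, show (1 : Fin (n + 1) → ℤ) = fun _ => 1 from rfl, halfProj_const,
        Set.mem_singleton_iff]
    right
    refine ⟨_, ⟨fun i => (x i : ℝ), ⟨fun i => ?_, fun h => hzero ?_, fun h => hone ?_⟩, rfl⟩, rfl⟩
    · rcases h01 i with h | h <;> simp [h]
    · ext i
      simpa using congrFun h i
    · ext i
      simpa using congrFun h i

theorem halfProj_leadingOnes (x : ℕ) :
    halfProj n (leadingOnes (n + 1) x) = (2⁻¹ : ℝ) • pH n (uvec n x) := by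
  rw [halfProj_apply]
  congr 2
  funext j
  simp only [leadingOnes, uvec]
  split_ifs <;> simp

end HalfProjection

section CliqueNeighborhood

variable {n s : ℕ}

theorem monotone_apply_min_of_lt_succ {w : ℕ → ℕ} (hmono : ∀ i < s, w i < w (i + 1)) :
    Monotone fun k => w (min k s) := by
  refine monotone_nat_of_le_succ fun k => ?_
  rcases lt_or_ge k s with hk | hk
  · rw [min_eq_left hk.le, min_eq_left (Nat.succ_le_of_lt hk)]
    exact (hmono k hk).le
  · rw [min_eq_right hk, min_eq_right (hk.trans k.le_succ)]

theorem insert_zero_image_eq_image_halfProj {w : ℕ → ℕ} (h0 : w 0 = 0) :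
    insert (0 : Fin (n + 1) → ℝ) ((fun i => (2⁻¹ : ℝ) • pH n (uvec n (w i))) '' Set.Icc 1 s)
      = (fun k => halfProj n (leadingOnes (n + 1) (w (min k s)))) '' Set.Iic s := by
  have hIic : Set.Iic s = insert 0 (Set.Icc 1 s) := by
    ext k
    simp only [Set.mem_Iic, Set.mem_insert_iff, Set.mem_Icc]
    omega
  rw [hIic, Set.image_insert_eq, min_eq_left s.zero_le, h0, leadingOnes_zero, map_zero]
  congr 1
  refine Set.image_congr fun k hk => ?_
  rw [min_eq_left hk.2, halfProj_leadingOnes]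

theorem image_add_zero_union_smul_VPAn {x : ℕ → ℕ} (hx : ∀ k ≤ s, x k ≤ n) :
    (fun k => halfProj n (leadingOnes (n + 1) (x k))) '' Set.Iic s + ({0} ∪ (2⁻¹ : ℝ) • VPAn n)
      = (fun r => halfProj n (Fin.snoc r 0)) '' ⋃ k ∈ Set.Iic s,
          (Set.Icc (leadingOnes n (x k) - 1) (leadingOnes n (x k))
            ∪ Set.Icc (leadingOnes n (x k)) (leadingOnes n (x k) + 1)) := by
  rw [zero_union_smul_VPAn, ← Set.image_image (halfProj n), ← Set.image_add,
    ← Set.iUnion_add_left_image, Set.biUnion_image, Set.image_iUnion₂, Set.image_iUnion₂]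
  refine Set.iUnion₂_congr fun k hk => ?_
  rw [Set.image_const_add_Icc, add_zero, image_halfProj_Icc (leadingOnes_last (hx k hk)),
    init_leadingOnes]

theorem card_doubledChainBoxes_leadingOnes {x : ℕ → ℕ} (hx : Monotone x) (h0 : x 0 = 0)
    (hs : x s ≤ n) :
    (doubledChainBoxes (fun k => leadingOnes n (x k)) s).card
      + (∑ i ∈ Finset.Icc 1 s, 2 ^ (n + 1 - (x i - x (i - 1))) + 2 ^ x s)
      = (s + 1) * 2 ^ (n + 1) := by
  have hcount := card_doubledChainBoxes (c := fun k => leadingOnes n (x k)) (s := s)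
    ((leadingOnes_mono n).comp hx) (by simp [h0]) leadingOnes_le_one
  simp only [h0, leadingOnes_zero, Pi.zero_apply, zero_add, card_filter_leadingOnes_eq_one hs,
    Fintype.card_fin] at hcount
  have hsum : ∑ i ∈ Finset.Icc 1 s, 2 ^ (n + 1 - (x i - x (i - 1)))
      = 2 * ∑ j ∈ Finset.range s, 2 ^ (Finset.univ.filter fun q =>
          leadingOnes n (x j) q = leadingOnes n (x (j + 1)) q).card := by
    rw [← Finset.Ico_add_one_right_eq_Icc, Finset.sum_Ico_eq_sum_range, add_tsub_cancel_right,
      Finset.mul_sum]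
    refine Finset.sum_congr rfl fun j hj => ?_
    have hj1 : x (j + 1) ≤ n := (hx (Finset.mem_range.mp hj)).trans hs
    rw [card_filter_leadingOnes_eq (hx j.le_succ) hj1, add_comm 1 j, add_tsub_cancel_right,
      ← pow_succ', Nat.sub_add_comm (by omega)]
  rw [hsum, pow_succ]
  linarith

theorem sum_Icc_two_pow_le {w : ℕ → ℕ} (hmono : ∀ i < s, w i < w (i + 1)) :
    ∑ i ∈ Finset.Icc 1 s, 2 ^ (n + 1 - (w i - w (i - 1))) ≤ s * 2 ^ n := by
  refine (Finset.sum_le_card_nsmul _ _ (2 ^ n) fun i hi => ?_).trans (by simp)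
  obtain ⟨hi1, his⟩ := Finset.mem_Icc.mp hi
  have hlt := hmono (i - 1) (by omega)
  rw [Nat.sub_add_cancel hi1] at hlt
  exact Nat.pow_le_pow_right two_pos (by omega)

theorem div_le_one_div_two_pow {a b : ℕ} (ha : a ≤ s + 1) (hb : (s + 1) * 2 ^ n ≤ b) :
    (a : ℝ) / b ≤ 1 / 2 ^ n := by
  have hb' : ((s : ℝ) + 1) * 2 ^ n ≤ b := by exact_mod_cast hb
  have ha' : (a : ℝ) ≤ s + 1 := by exact_mod_cast ha
  rw [div_le_div_iff₀ (lt_of_lt_of_le (by positivity) hb') (by positivity), one_mul]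
  nlinarith [pow_pos (two_pos : (0 : ℝ) < 2) n]

end CliqueNeighborhood

theorem clique_neighborhood_count_An (n s : ℕ) (w : ℕ → ℕ)
    (h0 : w 0 = 0) (hmono : ∀ i, i < s → w i < w (i + 1)) (hws : w s ≤ n)
    (C NC : Set (Fin (n + 1) → ℝ))
    (hC : C = insert (0 : Fin (n + 1) → ℝ)
      ((fun i => (2⁻¹ : ℝ) • pH n (uvec n (w i))) '' Set.Icc 1 s))
    (hNC : NC = C + ({0} ∪ (2⁻¹ : ℝ) • VPAn n)) :
    (NC.ncard : ℤ) = ((s : ℤ) + 1) * 2 ^ (n + 1)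
        - ((∑ i ∈ Finset.Icc 1 s, (2 : ℤ) ^ (n + 1 - (w i - w (i - 1)))) + 2 ^ (w s)) ∧
    (C.ncard : ℝ) / (NC.ncard : ℝ) ≤ 1 / 2 ^ n := by
  classical
  -- `x` agrees with `w` on `[0, s]` and is monotone on all of `ℕ`
  set x : ℕ → ℕ := fun k => w (min k s)
  have hx : Monotone x := monotone_apply_min_of_lt_succ hmono
  have hxs : x s = w s := by simp [x]
  have hC' : C = (fun k => halfProj n (leadingOnes (n + 1) (x k))) '' Set.Iic s :=
    hC.trans (insert_zero_image_eq_image_halfProj h0)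
  have hNC' : NC = (fun r => halfProj n (Fin.snoc r 0)) ''
      ↑(doubledChainBoxes (fun k => leadingOnes n (x k)) s) := by
    rw [hNC, hC', image_add_zero_union_smul_VPAn fun k hk => (hx hk).trans (hxs ▸ hws),
      coe_doubledChainBoxes]
  have hsum : ∑ i ∈ Finset.Icc 1 s, 2 ^ (n + 1 - (w i - w (i - 1)))
      = ∑ i ∈ Finset.Icc 1 s, 2 ^ (n + 1 - (x i - x (i - 1))) := by
    refine Finset.sum_congr rfl fun i hi => ?_
    have his := (Finset.mem_Icc.mp hi).2
    simp only [x, min_eq_left his, min_eq_left (his.trans' (Nat.sub_le i 1))]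
  have hcount : NC.ncard + (∑ i ∈ Finset.Icc 1 s, 2 ^ (n + 1 - (w i - w (i - 1))) + 2 ^ w s)
      = (s + 1) * 2 ^ (n + 1) := by
    rw [hNC', Set.ncard_image_of_injective _ halfProj_snoc_zero_injective, Set.ncard_coe_finset,
      hsum, ← hxs]
    exact card_doubledChainBoxes_leadingOnes hx (by simp [x, h0]) (hxs ▸ hws)
  have hCcard : C.ncard ≤ s + 1 := by
    rw [hC']
    exact (Set.ncard_image_le (Set.finite_Iic s)).trans (by simp)
  constructor
  · have := congrArg (Nat.cast : ℕ → ℤ) hcount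
    push_cast at this
    linarith
  · refine div_le_one_div_two_pow hCcard ?_
    have := sum_Icc_two_pow_le (n := n) hmono
    have := Nat.pow_le_pow_right two_pos hws
    rw [pow_succ] at hcount
    linarith
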